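/- arXiv:2201.10224 — 6 statements merged into one kernel-verified Lean document; each statement's English description precedes it below -/
import Mathlib

section
/- Let H = {x ∈ ℝ^m : cᵀx ≤ d} be a halfspace with c ∈ ℤ^m whose entries have greatest common divisor 1, and d ∈ ℚ. Then the integer hull of H (the convex hull of the integer points of H) equals {x ∈ ℝ^m : cᵀx ≤ ⌊d⌋}. -/
/-!
Integer points satisfy `cᵀz ≤ d` iff they satisfy `cᵀz ≤ ⌊d⌋`, so the hull lies in the
halfspace `cᵀx ≤ ⌊d⌋`. Conversely, let `K` be the integer hull. Translation by an integer vector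
`v` with `cᵀv ≤ 0` maps the integer points of the halfspace into themselves, hence `K` into
itself, and by convexity `K + t v ⊆ K` for every `t ≥ 0`: such `v` lie in the recession cone
of `K`. Both `±(c_k e_i - c_i e_k)`, which span `ker cᵀ`, and `-c` are such vectors, so the
recession cone contains the whole halfspace `cᵀy ≤ 0`. Since `gcd c = 1`, Bézout gives an
integer point `z₀` with `cᵀz₀ = ⌊d⌋`, and every `x` with `cᵀx ≤ ⌊d⌋` is `z₀ + (x - z₀)` with
`x - z₀` in the recession cone.
-/

open Matrix

section RecessionCone

variable (𝕜 : Type*) {E : Type*} [Semiring 𝕜] [PartialOrder 𝕜] [IsOrderedRing 𝕜]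
  [AddCommMonoid E] [Module 𝕜 E]

def recessionCone (s : Set E) : PointedCone 𝕜 E where
  carrier := {v | ∀ x ∈ s, ∀ t : 𝕜, 0 ≤ t → x + t • v ∈ s}
  add_mem' {v w} hv hw x hx t ht := by
    rw [smul_add, ← add_assoc]
    exact hw _ (hv x hx t ht) t ht
  zero_mem' x hx t _ := by simpa using hx
  smul_mem' r v hv x hx t ht := by
    change x + t • ((r : 𝕜) • v) ∈ s
    rw [smul_smul]
    exact hv x hx _ (mul_nonneg ht r.2)

end RecessionCone

section ConvexRecessionCone

variable {𝕜 E : Type*} [Field 𝕜] [LinearOrder 𝕜] [IsStrictOrderedRing 𝕜] [FloorSemiring 𝕜]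
  [AddCommGroup E] [Module 𝕜 E] {s : Set E} {v : E}

theorem Convex.mem_recessionCone_of_add_mem (hs : Convex 𝕜 s) (hv : ∀ x ∈ s, x + v ∈ s) :
    v ∈ recessionCone 𝕜 s := by
  intro x hx t ht
  have hnat : ∀ n : ℕ, x + (n : 𝕜) • v ∈ s := by
    intro n
    induction n with
    | zero => simpa using hx
    | succ n ih => simpa [add_smul, add_assoc] using hv _ ih
  obtain rfl | ht := ht.eq_or_lt
  · simpa using hx
  have hn : (0 : 𝕜) < ⌈t⌉₊ := ht.trans_le (Nat.le_ceil t)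
  have := hs.add_smul_mem hx (hnat ⌈t⌉₊)
    ⟨div_nonneg ht.le hn.le, div_le_one_of_le₀ (Nat.le_ceil t) hn.le⟩
  rwa [smul_smul, div_mul_cancel₀ _ hn.ne'] at this

theorem mem_recessionCone_convexHull (hv : ∀ x ∈ s, x + v ∈ s) :
    v ∈ recessionCone 𝕜 (convexHull 𝕜 s) :=
  (convex_convexHull 𝕜 s).mem_recessionCone_of_add_mem fun _ hx =>
    convexHull_min (fun y hy => Set.mem_preimage.2 (subset_convexHull 𝕜 s (hv y hy)))
      ((convex_convexHull 𝕜 s).translate_preimage_left v) hx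

end ConvexRecessionCone

theorem mem_span_single_sub_single_of_dotProduct_eq_zero {K n : Type*} [Field K] [Fintype n]
    [DecidableEq n] {c w : n → K} {k : n} (hk : c k ≠ 0) (hw : c ⬝ᵥ w = 0) :
    w ∈ Submodule.span K (Set.range fun i => Pi.single i (c k) - Pi.single k (c i)) := by
  have hsum : ∑ i, w i / c k * c i = 0 := by
    simp only [div_mul_eq_mul_div, ← Finset.sum_div, mul_comm (w _)]
    rw [← dotProduct, hw, zero_div]
  have hw' : w = ∑ i, (w i / c k) • (Pi.single i (c k) - Pi.single k (c i) : n → K) := by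
    ext j
    simp [Finset.sum_apply, Pi.single_apply, mul_sub, hsum, hk]
  rw [hw']
  exact Submodule.sum_mem _ fun i _ => Submodule.smul_mem _ _ (Submodule.subset_span ⟨i, rfl⟩)

theorem PointedCone.halfspace_subset_of_intPoints_mem {𝕜 n : Type*} [Field 𝕜] [LinearOrder 𝕜]
    [IsStrictOrderedRing 𝕜] [Fintype n] [DecidableEq n] {c : n → ℤ} (hc : c ≠ 0)
    {C : PointedCone 𝕜 (n → 𝕜)} (hC : ∀ v : n → ℤ, c ⬝ᵥ v ≤ 0 → (Int.cast ∘ v : n → 𝕜) ∈ C) :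
    {y : n → 𝕜 | Int.cast ∘ c ⬝ᵥ y ≤ 0} ⊆ C := by
  set c' : n → 𝕜 := Int.cast ∘ c
  obtain ⟨k, hk⟩ : ∃ k, c k ≠ 0 := Function.ne_iff.1 hc
  have hk' : c' k ≠ 0 := Int.cast_ne_zero.2 hk
  have hlineal : Submodule.span 𝕜
      (Set.range fun i => Pi.single i (c' k) - Pi.single k (c' i)) ≤ C.lineal := by
    refine Submodule.span_le.2 ?_
    rintro _ ⟨i, rfl⟩
    set f : n → ℤ := Pi.single i (c k) - Pi.single k (c i)
    have hf : c ⬝ᵥ f = 0 := by simp [f, dotProduct_sub, dotProduct_single, mul_comm]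
    have hf_cast : (Int.cast ∘ f : n → 𝕜) = Pi.single i (c' k) - Pi.single k (c' i) := by
      ext j
      simp only [f, c', Function.comp_apply, Pi.sub_apply, Int.cast_sub, Pi.single_apply]
      split_ifs <;> simp
    have hneg : (Int.cast ∘ (-f) : n → 𝕜) = -(Int.cast ∘ f) := by ext; simp
    dsimp only
    rw [SetLike.mem_coe, ← hf_cast, PointedCone.mem_lineal, ← hneg]
    exact ⟨hC f hf.le, hC (-f) (by rw [dotProduct_neg, hf, neg_zero])⟩
  have hc' : 0 < c' ⬝ᵥ c' := (Fintype.sum_nonneg fun i => mul_self_nonneg (c' i)).lt_of_ne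
    (Ne.symm (dotProduct_self_eq_zero.not.2 fun h => hk' (congrFun h k)))
  have hneg_c : (Int.cast ∘ (-c) : n → 𝕜) = -c' := by ext; simp [c']
  intro y hy
  -- `y = t • (-c') + w` with `t ≥ 0` and `c' ⬝ᵥ w = 0`
  set t : 𝕜 := -(c' ⬝ᵥ y) / (c' ⬝ᵥ c')
  have ht : 0 ≤ t := div_nonneg (neg_nonneg.2 hy) hc'.le
  rw [← add_sub_cancel (t • -c') y]
  refine C.add_mem (C.smul_mem ht (hneg_c ▸ hC (-c) ?_)) (C.lineal_le (hlineal ?_))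
  · rw [dotProduct_neg, neg_nonpos]
    exact Fintype.sum_nonneg fun i => mul_self_nonneg (c i)
  · refine mem_span_single_sub_single_of_dotProduct_eq_zero hk' ?_
    rw [dotProduct_sub, dotProduct_smul, dotProduct_neg, smul_eq_mul, mul_neg, sub_neg_eq_add,
      div_mul_cancel₀ _ hc'.ne', add_neg_cancel]

theorem convexHull_intPoints_dotProduct_le {𝕜 n : Type*} [Field 𝕜] [LinearOrder 𝕜]
    [IsStrictOrderedRing 𝕜] [FloorSemiring 𝕜] [Fintype n] [DecidableEq n] {c : n → ℤ}
    (hc : Finset.univ.gcd c = 1) (N : ℤ) :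
    convexHull 𝕜 ((Int.cast ∘ ·) '' {z : n → ℤ | c ⬝ᵥ z ≤ N}) =
      {x : n → 𝕜 | Int.cast ∘ c ⬝ᵥ x ≤ N} := by
  have hcast : ∀ z : n → ℤ, (Int.cast ∘ c ⬝ᵥ Int.cast ∘ z : 𝕜) = ((c ⬝ᵥ z : ℤ) : 𝕜) :=
    fun z => ((Int.castRingHom 𝕜).map_dotProduct c z).symm
  refine subset_antisymm (convexHull_min ?_ ?_) fun x hx => ?_
  · rintro _ ⟨z, hz, rfl⟩
    simpa [hcast] using hz
  · exact convex_halfSpace_le ⟨dotProduct_add _, fun r x => dotProduct_smul r _ x⟩ _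
  set K := convexHull 𝕜 ((Int.cast ∘ ·) '' {z : n → ℤ | c ⬝ᵥ z ≤ N} : Set (n → 𝕜))
  have hc0 : c ≠ 0 := by
    rintro rfl
    exact zero_ne_one (hc ▸ (Finset.gcd_eq_zero_iff.2 fun _ _ => rfl).symm)
  obtain ⟨u, hu⟩ := Finset.univ.gcd_eq_sum_mul c
  rw [hc] at hu
  have hu' : c ⬝ᵥ (N • u) = N := by rw [dotProduct_smul, dotProduct, ← hu, smul_eq_mul, mul_one]
  have hbase : (Int.cast ∘ (N • u) : n → 𝕜) ∈ K := subset_convexHull 𝕜 _ ⟨N • u, hu'.le, rfl⟩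
  have hrec : {y : n → 𝕜 | Int.cast ∘ c ⬝ᵥ y ≤ 0} ⊆ recessionCone 𝕜 K := by
    refine PointedCone.halfspace_subset_of_intPoints_mem hc0 fun v hv =>
      mem_recessionCone_convexHull ?_
    rintro _ ⟨z, hz : c ⬝ᵥ z ≤ N, rfl⟩
    refine ⟨z + v, ?_, ?_⟩
    · rw [Set.mem_ofPred, dotProduct_add]; linarith
    · ext; simp
  have hdir : x - Int.cast ∘ (N • u) ∈ recessionCone 𝕜 K := hrec <| by
    rw [Set.mem_ofPred, dotProduct_sub, hcast, hu', sub_nonpos]; exact hx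
  simpa using hdir _ hbase 1 zero_le_one

theorem integer_hull_of_rational_halfspace {m : ℕ} (c : Fin m → ℤ)
    (hgcd : Finset.univ.gcd c = 1) (d : ℚ) :
    convexHull ℝ
        {x : Fin m → ℝ |
          (∑ i, (c i : ℝ) * x i ≤ (d : ℝ)) ∧ ∀ i, ∃ z : ℤ, x i = (z : ℝ)}
      = {x : Fin m → ℝ | ∑ i, (c i : ℝ) * x i ≤ ((⌊d⌋ : ℤ) : ℝ)} := by
  have hcast : ∀ z : Fin m → ℤ, ∑ i, (c i : ℝ) * (z i : ℝ) = ((c ⬝ᵥ z : ℤ) : ℝ) := by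
    intro z; push_cast [dotProduct]; rfl
  have hpoints : {x : Fin m → ℝ | (∑ i, (c i : ℝ) * x i ≤ (d : ℝ)) ∧ ∀ i, ∃ z : ℤ, x i = (z : ℝ)}
      = (Int.cast ∘ ·) '' {z : Fin m → ℤ | c ⬝ᵥ z ≤ ⌊d⌋} := by
    ext x
    constructor
    · rintro ⟨hx, hint⟩
      choose z hz using hint
      obtain rfl : x = Int.cast ∘ z := funext hz
      exact ⟨z, Int.le_floor.2 (by exact_mod_cast (hcast z) ▸ hx), rfl⟩
    · rintro ⟨z, hz, rfl⟩
      refine ⟨(hcast z).trans_le ?_, fun i => ⟨z i, rfl⟩⟩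
      exact_mod_cast Int.le_floor.1 hz
  rw [hpoints]
  exact convexHull_intPoints_dotProduct_le hgcd ⌊d⌋
end

section
/- A symmetric matrix X ∈ {0,1}^{n×n} is positive semidefinite if and only if X = Σ_{i=1}^k x_i x_iᵀ for some vectors x_1, …, x_k ∈ {0,1}^n. -/
/-!
Evaluating the quadratic form of a positive semidefinite 0/1 matrix `X` at `eᵢ - eⱼ + eₖ` shows
that `X i j = X j k = 1` forces `X i k = 1`. With symmetry, two rows of `X` that share a `1`
coincide, so `X` is the sum of `v vᵀ` over its distinct rows `v` (a zero row contributes nothing).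
Conversely, every sum of matrices `v vᵀ` is positive semidefinite.
-/

open Matrix

namespace Matrix.PosSemidef

section

variable {ι R : Type*} [CommRing R] [PartialOrder R] [StarRing R] [TrivialStar R]
  {A : Matrix ι ι R}

theorem isSymm (hA : A.PosSemidef) : A.IsSymm :=
  isHermitian_iff_isSymm.1 hA.isHermitian

theorem apply_triangle_nonneg [Fintype ι] (hA : A.PosSemidef) (i j k : ι) :
    0 ≤ A i i + A j j + A k k - A i j - A j i - A j k - A k j + A i k + A k i := by
  classical
  convert hA.dotProduct_mulVec_nonneg (Pi.single i 1 - Pi.single j 1 + Pi.single k 1) using 1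
  simp only [star_trivial, mulVec_add, mulVec_sub, mulVec_single_one, dotProduct_add,
    add_dotProduct, dotProduct_sub, sub_dotProduct, single_one_dotProduct, col_apply]
  ring

end

section

variable {ι : Type*} [Fintype ι] {X : Matrix ι ι ℝ}
  (hX : X.PosSemidef) (hbin : ∀ i j, X i j = 0 ∨ X i j = 1)
include hX hbin

theorem apply_eq_one_trans {i j k : ι} (hij : X i j = 1) (hjk : X j k = 1) : X i k = 1 := by
  have hdiag : ∀ a, X a a ≤ 1 := fun a => by rcases hbin a a with h | h <;> simp [h]
  refine (hbin i k).resolve_left fun hik => ?_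
  linarith [hX.apply_triangle_nonneg i j k, hdiag i, hdiag j, hdiag k, hX.isSymm.apply i j,
    hX.isSymm.apply j k, hX.isSymm.apply i k]

theorem row_eq_of_apply_eq_one {i j : ι} (hij : X i j = 1) : X i = X j := by
  have hji : X j i = 1 := hX.isSymm.apply i j ▸ hij
  funext m
  rcases hbin i m with him | him <;> rcases hbin j m with hjm | hjm
  · rw [him, hjm]
  · simpa [him] using hX.apply_eq_one_trans hbin hij hjm
  · simpa [hjm] using hX.apply_eq_one_trans hbin hji him
  · rw [him, hjm]

theorem apply_mul_apply_eq_ite (i j l : ι) :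
    X i j * X i l = if X i = X j then X j l else 0 := by
  split_ifs with h
  · rw [h]
    rcases hbin j l with hjl | hjl
    · rw [hjl, mul_zero]
    · rw [hjl, hX.apply_eq_one_trans hbin hjl (hX.isSymm.apply j l ▸ hjl), mul_one]
  · rcases hbin i j with hij | hij
    · rw [hij, zero_mul]
    · exact absurd (hX.row_eq_of_apply_eq_one hbin hij) h

theorem eq_sum_image_vecMulVec_self : X = ∑ v ∈ Finset.univ.image X, vecMulVec v v := by
  ext j l
  have hsummand : ∀ v ∈ Finset.univ.image X,
      vecMulVec v v j l = if v = X j then X j l else 0 := by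
    intro v hv
    obtain ⟨i, -, rfl⟩ := Finset.mem_image.1 hv
    exact hX.apply_mul_apply_eq_ite hbin i j l
  rw [Matrix.sum_apply, Finset.sum_congr rfl hsummand, Finset.sum_ite_eq',
    if_pos (Finset.mem_image_of_mem X (Finset.mem_univ j))]

end

end Matrix.PosSemidef

theorem Finset.exists_sum_eq_sum_fin {α M : Type*} [AddCommMonoid M] (s : Finset α)
    (f : α → M) : ∃ (k : ℕ) (x : Fin k → α), (∀ i, x i ∈ s) ∧ ∑ a ∈ s, f a = ∑ i, f (x i) :=
  ⟨s.card, fun i => s.equivFin.symm i, fun i => (s.equivFin.symm i).2, by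
    rw [← Finset.sum_coe_sort s, ← s.equivFin.symm.sum_comp]⟩

theorem binary_psd_iff_sum_of_binary_rank_one_general {n : ℕ}
    (X : Matrix (Fin n) (Fin n) ℝ)
    (hbin : ∀ i j, X i j = 0 ∨ X i j = 1) :
    X.PosSemidef ↔
      ∃ (k : ℕ) (x : Fin k → Fin n → ℝ),
        (∀ i j, x i j = 0 ∨ x i j = 1) ∧
        X = ∑ i, Matrix.vecMulVec (x i) (x i) := by
  constructor
  · intro hX
    obtain ⟨k, x, hx, hsum⟩ :=
      (Finset.univ.image X).exists_sum_eq_sum_fin fun v => vecMulVec v v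
    refine ⟨k, x, fun i j => ?_, (hX.eq_sum_image_vecMulVec_self hbin).trans hsum⟩
    obtain ⟨m, -, hm⟩ := Finset.mem_image.1 (hx i)
    exact hm ▸ hbin m j
  · rintro ⟨k, x, -, rfl⟩
    exact posSemidef_sum _ fun i _ => by simpa using posSemidef_vecMulVec_self_star (x i)

theorem binary_psd_iff_sum_of_binary_rank_one {n : ℕ}
    (X : Matrix (Fin n) (Fin n) ℝ) (hsym : X.IsSymm)
    (hbin : ∀ i j, X i j = 0 ∨ X i j = 1) :
    X.PosSemidef ↔
      ∃ (k : ℕ) (x : Fin k → Fin n → ℝ),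
        (∀ i j, x i j = 0 ∨ x i j = 1) ∧
        X = ∑ i, Matrix.vecMulVec (x i) (x i) :=
  binary_psd_iff_sum_of_binary_rank_one_general X hbin
end

section
/- A binary symmetric matrix X ∈ {0,1}^{n×n} is positive semidefinite if and only if it contains neither a dominated diagonal (indices i ≠ j with X_{ii} = 0 and X_{ij} = 1) nor a conflicting vertex (distinct indices i, j, k with X_{ii} = X_{ij} = X_{ik} = X_{jj} = X_{kk} = 1 and X_{jk} = 0). -/
/-!
A dominated diagonal or a conflicting vertex gives a test vector `e_j - e_i` or
`e_j + e_k - e_i` on which the quadratic form is `-1`. Conversely, if neither occurs then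
`X i j = 1` is a symmetric and transitive relation, so `X` is the indicator matrix of an
equivalence relation on the indices with `X i i = 1`; that matrix is the Gram matrix `Bᴴ * B`
of the indicator vectors of the equivalence classes.
-/

open Matrix

section PartialEquivalence

variable {ι : Type*} {r : ι → ι → Prop} [Std.Symm r] [IsTrans ι r]

theorem rel_iff_rel_self_and_eq (i j : ι) : r i j ↔ r i i ∧ r j j ∧ r i = r j := by
  refine ⟨fun hij => ⟨_root_.trans hij (symm hij), _root_.trans (symm hij) hij, ?_⟩,
    fun ⟨hii, _, hclass⟩ => symm (hclass ▸ hii)⟩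
  ext k
  exact ⟨_root_.trans (symm hij), _root_.trans hij⟩

theorem Matrix.posSemidef_of_symm_of_trans {R : Type*} [Fintype ι] [DecidableRel r] [CommRing R]
    [PartialOrder R] [StarRing R] [StarOrderedRing R] :
    (of fun i j => if r i j then (1 : R) else 0).PosSemidef := by
  classical
  -- rows of `B` are indexed by the equivalence classes, each represented by the predicate `r i`
  let B : Matrix (ι → Prop) ι R := of fun s i => if r i i ∧ r i = s then 1 else 0
  convert posSemidef_conjTranspose_mul_self B using 1
  ext i j
  simp only [B, of_apply, mul_apply, conjTranspose_apply, rel_iff_rel_self_and_eq i j, ite_and,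
    eq_comm, apply_ite star, star_one, star_zero, mul_ite, mul_one, mul_zero, Finset.sum_ite_irrel,
    Finset.sum_ite_eq', Finset.mem_univ, if_true, Finset.sum_const_zero]
  split_ifs <;> rfl

end PartialEquivalence

namespace Matrix

section Definitions

variable {ι R : Type*} [Zero R] [One R]

def HasDominatedDiagonal (X : Matrix ι ι R) : Prop :=
  ∃ i j, i ≠ j ∧ X i i = 0 ∧ X i j = 1

def HasConflictingVertex (X : Matrix ι ι R) : Prop :=
  ∃ i j k, i ≠ j ∧ i ≠ k ∧ j ≠ k ∧
    X i i = 1 ∧ X i j = 1 ∧ X i k = 1 ∧ X j j = 1 ∧ X k k = 1 ∧ X j k = 0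

end Definitions

namespace PosSemidef

variable {ι R : Type*} [CommRing R] [PartialOrder R] [StarRing R] [TrivialStar R]
  {X : Matrix ι ι R}

theorem sub_offDiag_nonneg (hX : X.PosSemidef) (i j : ι) :
    0 ≤ X i i + X j j - X i j - X j i := by
  have h := (hX.submatrix ![i, j]).dotProduct_mulVec_nonneg ![-1, 1]
  simp only [dotProduct, mulVec, Fin.sum_univ_two, star_trivial, submatrix_apply] at h
  convert h using 1
  simp only [Fin.isValue, cons_val_zero, cons_val_one, cons_val_fin_one, mul_neg, mul_one,
    neg_mul, one_mul]
  ring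

theorem sub_offDiag_nonneg_three (hX : X.PosSemidef) (i j k : ι) :
    0 ≤ X i i + X j j + X k k + X j k + X k j - X i j - X j i - X i k - X k i := by
  have h := (hX.submatrix ![i, j, k]).dotProduct_mulVec_nonneg ![-1, 1, 1]
  simp only [dotProduct, mulVec, Fin.sum_univ_three, star_trivial, submatrix_apply] at h
  convert h using 1
  simp only [Fin.isValue, cons_val_zero, cons_val_one, cons_val, mul_neg, mul_one, neg_mul,
    one_mul]
  ring

variable {X : Matrix ι ι ℝ}

theorem not_hasDominatedDiagonal (hX : X.PosSemidef) (hbin : ∀ i j, X i j = 0 ∨ X i j = 1) :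
    ¬ X.HasDominatedDiagonal := by
  rintro ⟨i, j, -, hii, hij⟩
  have hji : X j i = 1 := by simpa [hij] using hX.isHermitian.apply i j
  have h := hX.sub_offDiag_nonneg i j
  rw [hii, hij, hji] at h
  rcases hbin j j with hjj | hjj <;> rw [hjj] at h <;> norm_num at h

theorem not_hasConflictingVertex (hX : X.PosSemidef) : ¬ X.HasConflictingVertex := by
  rintro ⟨i, j, k, -, -, -, hii, hij, hik, hjj, hkk, hjk⟩
  have hsymm : ∀ a b, X b a = X a b := fun a b => by simpa using hX.isHermitian.apply a b
  have h := hX.sub_offDiag_nonneg_three i j k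
  rw [hsymm i j, hsymm i k, hsymm j k, hii, hij, hik, hjj, hkk, hjk] at h
  norm_num at h

end PosSemidef

section Binary

variable {ι R : Type*} [Zero R] [One R] {X : Matrix ι ι R}

theorem diag_eq_one_of_apply_eq_one (hbin : ∀ i j, X i j = 0 ∨ X i j = 1)
    (hdom : ¬ X.HasDominatedDiagonal) {i j : ι} (hij : X i j = 1) : X i i = 1 := by
  by_cases hne : i = j
  · exact hne ▸ hij
  · exact (hbin i i).resolve_left fun hii => hdom ⟨i, j, hne, hii, hij⟩

theorem apply_eq_one_trans (hsym : X.IsSymm) (hbin : ∀ i j, X i j = 0 ∨ X i j = 1)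
    (hdom : ¬ X.HasDominatedDiagonal) (hconf : ¬ X.HasConflictingVertex) {i j k : ι}
    (hij : X i j = 1) (hjk : X j k = 1) : X i k = 1 := by
  have hji : X j i = 1 := (hsym.apply i j).trans hij
  by_cases hik : i = k
  · exact hik ▸ diag_eq_one_of_apply_eq_one hbin hdom hij
  by_cases hi : i = j
  · exact hi ▸ hjk
  by_cases hj : j = k
  · exact hj ▸ hij
  refine (hbin i k).resolve_left fun hik0 => hconf ⟨j, i, k, Ne.symm hi, hj, hik,
    diag_eq_one_of_apply_eq_one hbin hdom hji, hji, hjk,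
    diag_eq_one_of_apply_eq_one hbin hdom hij, ?_, hik0⟩
  exact diag_eq_one_of_apply_eq_one hbin hdom ((hsym.apply j k).trans hjk)

end Binary

end Matrix

theorem binary_psd_iff_no_dominated_diagonal_no_conflicting_vertex {n : ℕ}
    (X : Matrix (Fin n) (Fin n) ℝ) (hsym : X.IsSymm)
    (hbin : ∀ i j, X i j = 0 ∨ X i j = 1) :
    X.PosSemidef ↔
      (¬ ∃ i j, i ≠ j ∧ X i i = 0 ∧ X i j = 1) ∧
      (¬ ∃ i j k, i ≠ j ∧ i ≠ k ∧ j ≠ k ∧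
        X i i = 1 ∧ X i j = 1 ∧ X i k = 1 ∧ X j j = 1 ∧ X k k = 1 ∧ X j k = 0) := by
  refine ⟨fun hX => ⟨hX.not_hasDominatedDiagonal hbin, hX.not_hasConflictingVertex⟩, ?_⟩
  rintro ⟨hdom, hconf⟩
  classical
  let r : Fin n → Fin n → Prop := fun i j => X i j = 1
  have : Std.Symm r := ⟨fun i j hij => (hsym.apply i j).trans hij⟩
  have : IsTrans (Fin n) r := ⟨fun _ _ _ => apply_eq_one_trans hsym hbin hdom hconf⟩
  have hX : X = of fun i j => if r i j then 1 else 0 := by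
    ext i j
    rcases hbin i j with h | h <;> simp [r, h]
  exact hX ▸ posSemidef_of_symm_of_trans
end

section
/- Let X ∈ {0,1}^{n×n} be the adjacency matrix of a directed Hamiltonian cycle on n ≥ 3 nodes and set Z = β I_n + α J_n − (1/2)(X + Xᵀ), where β ≥ cos(2π/n) and α ≥ (1 − cos(2π/n))/n. Then Z is positive semidefinite. -/
/-!
The quadratic form of `Z` is `β ‖x‖² + α (∑ xᵢ)² - ∑ xᵢ x_{σ i}`, so everything rests on bounding
the cyclic autocorrelation `∑ xᵢ x_{σ i}`. After conjugating `σ` to the rotation `j ↦ j + 1` of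
`ZMod n`, Parseval for the discrete Fourier transform `ŷ` gives
`n ∑ⱼ yⱼ yⱼ₊₁ = ∑ₖ ‖ŷₖ‖² cos (2πk/n)`. Every frequency `k ≠ 0` has `cos (2πk/n) ≤ cos (2π/n)`,
and the remaining excess at `k = 0` is `(1 - cos (2π/n)) ‖ŷ₀‖² = (1 - cos (2π/n)) (∑ y)²`,
which is what the all-ones term pays for.
-/

open Matrix

namespace Real

theorem cos_two_pi_mul_div_le {m n : ℕ} (hm : m ≠ 0) (hmn : m < n) :
    cos (2 * π * m / n) ≤ cos (2 * π / n) := by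
  have hn : (0 : ℝ) < n := by norm_cast; omega
  wlog h : 2 * m ≤ n generalizing m with H
  · have hcast : ((n - m : ℕ) : ℝ) = n - m := by push_cast [hmn.le]; ring
    have := H (m := n - m) (by omega) (by omega) (by omega)
    rwa [hcast, mul_sub, sub_div, mul_div_cancel_right₀ _ hn.ne', cos_two_pi_sub] at this
  have hm1 : (1 : ℝ) ≤ m := by exact_mod_cast Nat.one_le_iff_ne_zero.mpr hm
  have h2m : (2 * m : ℝ) ≤ n := by exact_mod_cast h
  apply cos_le_cos_of_nonneg_of_le_pi (by positivity)
  · rw [div_le_iff₀ hn]; nlinarith [pi_pos]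
  · exact div_le_div_of_nonneg_right (le_mul_of_one_le_right (by positivity) hm1) hn.le

end Real

namespace ZMod

open Complex ComplexConjugate

variable {N : ℕ} [NeZero N]

lemma conj_stdAddChar (j : ZMod N) : conj (stdAddChar j) = stdAddChar (-j) := by
  rw [stdAddChar_apply, stdAddChar_apply, ← Circle.coe_inv_eq_conj, AddChar.map_neg_eq_inv]

lemma re_stdAddChar (j : ZMod N) :
    (stdAddChar j).re = Real.cos (2 * Real.pi * j.val / N) := by
  rw [stdAddChar_apply, toCircle_eq_circleExp, Circle.coe_exp, exp_ofReal_mul_I_re]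
  ring_nf

lemma re_stdAddChar_le {j : ZMod N} (hj : j ≠ 0) :
    (stdAddChar j).re ≤ Real.cos (2 * Real.pi / N) := by
  rw [re_stdAddChar]
  exact Real.cos_two_pi_mul_div_le ((val_ne_zero j).mpr hj) (val_lt j)

lemma dft_comp_add_right {E : Type*} [AddCommGroup E] [Module ℂ E] (Φ : ZMod N → E)
    (t k : ZMod N) : 𝓕 (fun j ↦ Φ (j + t)) k = stdAddChar (t * k) • 𝓕 Φ k := by
  simp only [dft_apply, Finset.smul_sum, smul_smul, ← AddChar.map_add_eq_mul]
  refine Fintype.sum_equiv (Equiv.addRight t) _ _ fun j ↦ ?_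
  simp only [Equiv.coe_addRight]
  congr 2
  ring

lemma sum_conj_dft_mul_dft (Φ Ψ : ZMod N → ℂ) :
    ∑ k, conj (𝓕 Φ k) * 𝓕 Ψ k = N * ∑ j, conj (Φ j) * Ψ j := by
  have hinv (j : ZMod N) : ∑ k, conj (𝓕 Φ k) * stdAddChar (-(j * k)) = N * conj (Φ j) := by
    have := congrArg conj (congrFun (dft_dft Φ) (-j))
    rw [dft_apply (𝓕 Φ)] at this
    simpa [map_sum, conj_stdAddChar, mul_comm] using this
  simp only [dft_apply Ψ, smul_eq_mul, Finset.mul_sum]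
  rw [Finset.sum_comm]
  refine Finset.sum_congr rfl fun j _ ↦ ?_
  simp only [← mul_assoc, ← hinv j, Finset.sum_mul]

theorem sum_mul_add_one_le (y : ZMod N → ℝ) :
    ∑ j, y j * y (j + 1) ≤ Real.cos (2 * Real.pi / N) * ∑ j, y j ^ 2
      + (1 - Real.cos (2 * Real.pi / N)) / N * (∑ j, y j) ^ 2 := by
  set c := Real.cos (2 * Real.pi / N)
  set Y := 𝓕 (fun j ↦ (y j : ℂ)) with hY
  have hnorm : ∑ k, ‖Y k‖ ^ 2 = N * ∑ j, y j ^ 2 := by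
    have := sum_conj_dft_mul_dft (fun j ↦ (y j : ℂ)) (fun j ↦ (y j : ℂ))
    simp only [← hY, conj_mul', conj_ofReal, ← sq] at this
    exact_mod_cast this
  have hshift : ∑ k, ‖Y k‖ ^ 2 * (stdAddChar k).re = N * ∑ j, y j * y (j + 1) := by
    have := congrArg re (sum_conj_dft_mul_dft (fun j ↦ (y j : ℂ)) (fun j ↦ (y (j + 1) : ℂ)))
    simp only [dft_comp_add_right (fun j ↦ (y j : ℂ)), ← hY, one_mul, smul_eq_mul,
      mul_left_comm _ (stdAddChar _), conj_mul', conj_ofReal] at this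
    norm_cast at this
    simpa only [re_sum, ← ofReal_pow, re_mul_ofReal, ofReal_re, mul_comm] using this
  have hzero : ‖Y 0‖ ^ 2 = (∑ j, y j) ^ 2 := by
    rw [hY, dft_apply_zero, ← ofReal_sum, norm_real, Real.norm_eq_abs, sq_abs]
  have hbound :
      ∑ k, ‖Y k‖ ^ 2 * (stdAddChar k).re ≤ c * ∑ k, ‖Y k‖ ^ 2 + (1 - c) * ‖Y 0‖ ^ 2 := by
    suffices ∑ k, ‖Y k‖ ^ 2 * ((stdAddChar k).re - c) ≤ ‖Y 0‖ ^ 2 * (1 - c) by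
      simp only [mul_sub, Finset.sum_sub_distrib, ← Finset.sum_mul] at this
      linarith
    rw [← Finset.add_sum_erase _ _ (Finset.mem_univ 0), AddChar.map_zero_eq_one, one_re]
    refine add_le_of_nonpos_right (Finset.sum_nonpos fun k hk ↦ mul_nonpos_of_nonneg_of_nonpos
      (by positivity) (sub_nonpos.2 (re_stdAddChar_le (Finset.ne_of_mem_erase hk))))
  have hN : (0 : ℝ) < N := Nat.cast_pos.mpr (NeZero.pos N)
  rw [← mul_le_mul_iff_of_pos_left hN]
  calc N * ∑ j, y j * y (j + 1) = ∑ k, ‖Y k‖ ^ 2 * (stdAddChar k).re := hshift.symm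
    _ ≤ c * ∑ k, ‖Y k‖ ^ 2 + (1 - c) * ‖Y 0‖ ^ 2 := hbound
    _ = N * (c * ∑ j, y j ^ 2 + (1 - c) / N * (∑ j, y j) ^ 2) := by
      rw [hnorm, hzero]; field_simp

end ZMod

theorem Equiv.Perm.IsCycle.sum_mul_apply_le {n : ℕ} {σ : Equiv.Perm (Fin n)} (hσ : σ.IsCycle)
    (hs : σ.support = Finset.univ) (x : Fin n → ℝ) :
    ∑ i, x i * x (σ i) ≤ Real.cos (2 * Real.pi / n) * ∑ i, x i ^ 2
      + (1 - Real.cos (2 * Real.pi / n)) / n * (∑ i, x i) ^ 2 := by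
  obtain ⟨m, rfl⟩ : ∃ m, n = m + 2 := by
    have := hσ.two_le_card_support
    rw [hs, Finset.card_univ, Fintype.card_fin] at this
    exact ⟨n - 2, by omega⟩
  obtain ⟨c, hc⟩ :=
    _root_.isConj_iff.mp (hσ.isConj isCycle_finRotate (by rw [hs, support_finRotate]))
  have hσc (j : Fin (m + 2)) : σ (c⁻¹ j) = c⁻¹ (j + 1) := by
    rw [← finRotate_apply, ← hc]; simp
  simp only [← Equiv.sum_comp c⁻¹ (fun i ↦ x i * x (σ i)), ← Equiv.sum_comp c⁻¹ (fun i ↦ x i ^ 2),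
    ← Equiv.sum_comp c⁻¹ x, hσc]
  -- `ZMod (m + 2)` is `Fin (m + 2)` by definition, with the same addition.
  exact ZMod.sum_mul_add_one_le (N := m + 2) (x ∘ ⇑c⁻¹ : Fin (m + 2) → ℝ)

theorem hamiltonian_cycle_certificate_psd_general {n : ℕ}
    (σ : Equiv.Perm (Fin n)) (hcyc : σ.IsCycle) (hsupp : σ.support = Finset.univ)
    (X : Matrix (Fin n) (Fin n) ℝ)
    (hX : ∀ i j, X i j = if σ i = j then 1 else 0)
    (α β : ℝ) (hβ : Real.cos (2 * Real.pi / n) ≤ β)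
    (hα : (1 - Real.cos (2 * Real.pi / n)) / n ≤ α) :
    (β • (1 : Matrix (Fin n) (Fin n) ℝ)
      + α • (Matrix.of fun _ _ => (1 : ℝ))
      - (1 / 2 : ℝ) • (X + Xᵀ)).PosSemidef := by
  obtain rfl : X = σ.permMatrix ℝ := by ext i j; simp [hX, PEquiv.toMatrix_apply]
  set J : Matrix (Fin n) (Fin n) ℝ := of fun _ _ ↦ 1
  refine .of_dotProduct_mulVec_nonneg ?_ fun x ↦ ?_
  · have hXXt : (σ.permMatrix ℝ + (σ.permMatrix ℝ)ᵀ).IsHermitian := by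
      simpa [conjTranspose_eq_transpose_of_trivial] using
        isHermitian_add_transpose_self (σ.permMatrix ℝ)
    have hJ : J.IsHermitian := IsHermitian.ext fun _ _ ↦ by simp [J]
    exact ((isHermitian_one.smul (.all β)).add (hJ.smul (.all α))).sub (hXXt.smul (.all _))
  · have hI : x ⬝ᵥ (1 : Matrix (Fin n) (Fin n) ℝ) *ᵥ x = ∑ i, x i ^ 2 := by
      simp [dotProduct, sq]
    have hJ : x ⬝ᵥ J *ᵥ x = (∑ i, x i) ^ 2 := by simp [J, mulVec, dotProduct, ← Finset.sum_mul, sq]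
    have hX : x ⬝ᵥ σ.permMatrix ℝ *ᵥ x = ∑ i, x i * x (σ i) := by rw [permMatrix_mulVec]; rfl
    have hXt : x ⬝ᵥ (σ.permMatrix ℝ)ᵀ *ᵥ x = ∑ i, x i * x (σ i) := by
      rw [dotProduct_mulVec, vecMul_transpose, dotProduct_comm, hX]
    simp only [star_trivial, sub_mulVec, add_mulVec, smul_mulVec, dotProduct_sub, dotProduct_add,
      dotProduct_smul, hI, hJ, hX, hXt, smul_eq_mul]
    have hcycle := hcyc.sum_mul_apply_le hsupp x
    have hβ' := mul_le_mul_of_nonneg_right hβ (by positivity : 0 ≤ ∑ i, x i ^ 2)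
    have hα' := mul_le_mul_of_nonneg_right hα (sq_nonneg (∑ i, x i))
    linarith

theorem hamiltonian_cycle_certificate_psd {n : ℕ} (hn : 3 ≤ n)
    (σ : Equiv.Perm (Fin n)) (hcyc : σ.IsCycle) (hsupp : σ.support = Finset.univ)
    (X : Matrix (Fin n) (Fin n) ℝ)
    (hX : ∀ i j, X i j = if σ i = j then 1 else 0)
    (α β : ℝ) (hβ : Real.cos (2 * Real.pi / n) ≤ β)
    (hα : (1 - Real.cos (2 * Real.pi / n)) / n ≤ α) :
    (β • (1 : Matrix (Fin n) (Fin n) ℝ)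
      + α • (Matrix.of fun _ _ => (1 : ℝ))
      - (1 / 2 : ℝ) • (X + Xᵀ)).PosSemidef :=
  hamiltonian_cycle_certificate_psd_general σ hcyc hsupp X hX α β hβ hα
end

section
/- Let X be the adjacency matrix of a spanning subgraph of a directed graph on n nodes in which every node has in-degree and out-degree one (i.e., X is a permutation matrix with zero diagonal), and suppose β I_n + α J_n − (1/2)(X + Xᵀ) ⪰ 0 for some β < 1 and α ∈ ℝ. Then X is the adjacency matrix of a single directed Hamiltonian cycle (the permutation is an n-cycle). -/
/-!
If the fixed-point-free permutation σ is not a single cycle, pick one of its cycles `C` and let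
`v = n • 𝟙_C - |C| • 𝟙`. Then `v ≠ 0`, `v` is constant on cycles (so `X v = Xᵀ v = v`) and has
zero sum (so `J v = 0`). Hence `v` is an eigenvector of `β I + α J - (X + Xᵀ)/2` with eigenvalue
`β - 1 < 0`, which is impossible for a positive semidefinite matrix.
-/

open Matrix

open scoped ComplexOrder in
theorem Matrix.PosSemidef.nonneg_of_mulVec_eq_smul {ι 𝕜 : Type*} [Fintype ι] [RCLike 𝕜]
    {M : Matrix ι ι 𝕜} (hM : M.PosSemidef) {v : ι → 𝕜} (hv : v ≠ 0) {c : 𝕜}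
    (h : M *ᵥ v = c • v) : 0 ≤ c := by
  have hquad := hM.dotProduct_mulVec_nonneg v
  rw [h, dotProduct_smul, smul_eq_mul] at hquad
  have hpos : 0 < star v ⬝ᵥ v := dotProduct_star_self_pos_iff.mpr hv
  simpa [hpos.ne'] using div_nonneg hquad hpos.le

namespace Equiv.Perm

variable {ι R : Type*} [Fintype ι] [DecidableEq ι]

theorem exists_invariant_sum_eq_zero_of_not_sameCycle [Ring R] [CharZero R]
    {σ : Perm ι} {x y : ι} (hxy : ¬ σ.SameCycle x y) :
    ∃ v : ι → R, v ∘ σ = v ∧ ∑ i, v i = 0 ∧ v ≠ 0 := by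
  let s : Finset ι := {i | σ.SameCycle x i}
  refine ⟨fun i => Fintype.card ι * (if σ.SameCycle x i then 1 else 0) - s.card, ?_, ?_, ?_⟩
  · ext i; simp only [Function.comp_apply, sameCycle_apply_right]
  · rw [Finset.sum_sub_distrib, ← Finset.mul_sum, Finset.sum_boole, Finset.sum_const,
      Finset.card_univ, nsmul_eq_mul, sub_self]
  · have hs : s.card ≠ 0 := Finset.card_ne_zero.mpr ⟨x, by simp [s, SameCycle.refl]⟩
    exact Function.ne_iff.mpr ⟨y, by simp [hxy, hs]⟩

theorem permMatrix_mulVec_eq_self [CommRing R] {σ : Perm ι} {v : ι → R}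
    (hv : v ∘ σ = v) : σ.permMatrix R *ᵥ v = v := by
  rw [permMatrix_mulVec, hv]

theorem transpose_permMatrix_mulVec_eq_self [CommRing R] {σ : Perm ι} {v : ι → R}
    (hv : v ∘ σ = v) : (σ.permMatrix R)ᵀ *ᵥ v = v := by
  rw [transpose_permMatrix, permMatrix_mulVec, inv_def, Equiv.comp_symm_eq, hv]

end Equiv.Perm

theorem Matrix.of_const_one_mulVec {m ι R : Type*} [Fintype ι] [NonAssocSemiring R] (v : ι → R) :
    (of fun _ _ => 1 : Matrix m ι R) *ᵥ v = fun _ => ∑ i, v i := by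
  ext; simp [mulVec, dotProduct]

theorem psd_certificate_implies_hamiltonian {n : ℕ} (hn : 0 < n)
    (σ : Equiv.Perm (Fin n)) (hfix : ∀ i, σ i ≠ i)
    (X : Matrix (Fin n) (Fin n) ℝ)
    (hX : ∀ i j, X i j = if σ i = j then 1 else 0)
    (α β : ℝ) (hβ : β < 1)
    (hpsd : (β • (1 : Matrix (Fin n) (Fin n) ℝ)
      + α • (Matrix.of fun _ _ => (1 : ℝ))
      - (1 / 2 : ℝ) • (X + Xᵀ)).PosSemidef) :
    σ.IsCycle ∧ σ.support = Finset.univ := by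
  have hsupp : σ.support = Finset.univ := by
    ext i; simp [hfix i]
  refine ⟨?_, hsupp⟩
  by_contra hnc
  obtain ⟨y, hy⟩ : ∃ y, ¬ σ.SameCycle ⟨0, hn⟩ y := by
    by_contra! h
    exact hnc ⟨_, hfix _, fun y _ => h y⟩
  obtain ⟨v, hσv, hsum, hv⟩ :=
    Equiv.Perm.exists_invariant_sum_eq_zero_of_not_sameCycle (R := ℝ) hy
  have hXσ : X = σ.permMatrix ℝ := by
    ext i j; simp [hX, PEquiv.toMatrix_apply]
  have hMv : (β • (1 : Matrix (Fin n) (Fin n) ℝ) + α • (Matrix.of fun _ _ => (1 : ℝ))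
      - (1 / 2 : ℝ) • (X + Xᵀ)) *ᵥ v = (β - 1) • v := by
    rw [hXσ, sub_mulVec, add_mulVec, smul_mulVec, smul_mulVec, smul_mulVec, one_mulVec,
      of_const_one_mulVec, hsum, add_mulVec, Equiv.Perm.permMatrix_mulVec_eq_self hσv,
      Equiv.Perm.transpose_permMatrix_mulVec_eq_self hσv]
    rw [← Pi.zero_def, smul_zero, add_zero]
    module
  linarith [hpsd.nonneg_of_mulVec_eq_smul hv hMv]
end

section
/- Let X ∈ {0,1}^{n×n} be a permutation matrix with zero diagonal corresponding to a permutation whose cycle decomposition has cycles with node sets S₁, …, S_k, k ≥ 2. For l ∈ [k] define v^l ∈ ℝ^n by v^l_i = n − |S_l| if i ∈ S_l and v^l_i = −|S_l| otherwise. Then v^l is an eigenvector of β I_n + α J_n − (1/2)(X + Xᵀ) with eigenvalue β − 1; in particular, if β < 1 then ⟨v^l (v^l)ᵀ, β I_n + α J_n − (1/2)(X + Xᵀ)⟩ < 0 for every l ∈ [k]. -/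
open Matrix

theorem cycle_cover_eigenvector_cut {n k : ℕ} (hk : 2 ≤ k)
    (σ : Equiv.Perm (Fin n)) (hfix : ∀ i, σ i ≠ i)
    (X : Matrix (Fin n) (Fin n) ℝ)
    (hX : ∀ i j, X i j = if σ i = j then 1 else 0)
    (S : Fin k → Finset (Fin n))
    (hne : ∀ l, (S l).Nonempty)
    (hdisj : ∀ l p, l ≠ p → Disjoint (S l) (S p))
    (hcover : ∀ i, ∃ l, i ∈ S l)
    (hinv : ∀ l i, i ∈ S l ↔ σ i ∈ S l)
    (hcycle : ∀ l, ∀ i ∈ S l, ∀ j ∈ S l, σ.SameCycle i j)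
    (α β : ℝ)
    (v : Fin k → Fin n → ℝ)
    (hv : ∀ l i, v l i = if i ∈ S l then (n : ℝ) - (S l).card else -((S l).card : ℝ)) :
    ∀ l,
      (β • (1 : Matrix (Fin n) (Fin n) ℝ)
        + α • (Matrix.of fun _ _ => (1 : ℝ))
        - (1 / 2 : ℝ) • (X + Xᵀ)).mulVec (v l) = (β - 1) • v l
      ∧ (β < 1 →
          ((Matrix.vecMulVec (v l) (v l))ᵀ *
            (β • (1 : Matrix (Fin n) (Fin n) ℝ)
              + α • (Matrix.of fun _ _ => (1 : ℝ))
              - (1 / 2 : ℝ) • (X + Xᵀ))).trace < 0) := by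
  intro l
  set M : Matrix (Fin n) (Fin n) ℝ :=
    β • (1 : Matrix (Fin n) (Fin n) ℝ) + α • (Matrix.of fun _ _ => (1 : ℝ))
      - (1 / 2 : ℝ) • (X + Xᵀ) with hM
  -- card bound
  have hcard : (S l).card < n := by
    have : Nontrivial (Fin k) := Fin.nontrivial_iff_two_le.mpr hk
    obtain ⟨p, hp⟩ := exists_ne l
    obtain ⟨i0, hi0⟩ := hne p
    have hnl : i0 ∉ S l := Finset.disjoint_left.mp (hdisj p l hp) hi0
    have hne' : S l ≠ Finset.univ := fun h => hnl (h ▸ Finset.mem_univ i0)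
    have := Finset.card_lt_card (Finset.ssubset_univ_iff.mpr hne')
    simpa using this
  -- sum of v l is 0
  have hsum : ∑ j, v l j = 0 := by
    have h0 : ∀ j, v l j = (if j ∈ S l then (n : ℝ) else 0) - (S l).card := by
      intro j; rw [hv]; split <;> ring
    rw [Finset.sum_congr rfl fun j _ => h0 j, Finset.sum_sub_distrib]
    rw [Finset.sum_ite_mem, Finset.univ_inter, Finset.sum_const, Finset.sum_const]
    simp [nsmul_eq_mul]
    ring
  -- σ-invariance of v l
  have hvσ : ∀ i, v l (σ i) = v l i := by
    intro i
    simp only [hv]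
    exact if_congr (hinv l i).symm rfl rfl
  have hvσ' : ∀ i, v l (σ⁻¹ i) = v l i := by
    intro i
    have := hvσ (σ⁻¹ i)
    simpa using this.symm
  -- the eigenvector equation
  have hmul : M.mulVec (v l) = (β - 1) • v l := by
    funext i
    have h1 : ∀ j, M i j = β * (if i = j then 1 else 0) + α
        - (1/2) * ((if σ i = j then 1 else 0) + (if σ j = i then 1 else 0)) := by
      intro j
      simp [hM, Matrix.sub_apply, Matrix.add_apply, Matrix.smul_apply, Matrix.one_apply,
        Matrix.transpose_apply, hX, smul_eq_mul, Matrix.of_apply]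
      split_ifs <;> ring
    simp only [Matrix.mulVec, dotProduct]
    have h2 : ∀ j, M i j * v l j =
        β * ((if i = j then (1:ℝ) else 0) * v l j) + α * v l j
        - (1/2) * ((if σ i = j then (1:ℝ) else 0) * v l j + (if σ j = i then (1:ℝ) else 0) * v l j) := by
      intro j; rw [h1]; ring
    have expand : ∑ j, M i j * v l j =
        β * (∑ j, (if i = j then (1:ℝ) else 0) * v l j) + α * (∑ j, v l j)
        - 1/2 * ((∑ j, (if σ i = j then (1:ℝ) else 0) * v l j)
            + (∑ j, (if σ j = i then (1:ℝ) else 0) * v l j)) := by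
      simp only [Finset.mul_sum, mul_add, ← Finset.sum_add_distrib, ← Finset.sum_sub_distrib]
      exact Finset.sum_congr rfl fun j _ => by rw [h2 j]; ring
    rw [expand]
    have sA : ∑ j, (if i = j then (1:ℝ) else 0) * v l j = v l i := by simp
    have sB : ∑ j, (if σ i = j then (1:ℝ) else 0) * v l j = v l (σ i) := by simp
    have sC : ∑ j, (if σ j = i then (1:ℝ) else 0) * v l j = v l (σ⁻¹ i) := by
      have : ∀ j : Fin n, (σ j = i) ↔ (j = σ⁻¹ i) := by
        intro j
        constructor
        · intro h; simp [← h]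
        · intro h; simp [h]
      simp only [this]
      simp
    rw [sA, sB, sC, hsum, hvσ, hvσ']
    simp [Pi.smul_apply, smul_eq_mul]
    ring
  refine ⟨hmul, fun hβ => ?_⟩
  have hMv : ∀ j, ∑ i, M j i * v l i = (β - 1) * v l j := by
    intro j
    have := congrFun hmul j
    simpa [Matrix.mulVec, dotProduct, Pi.smul_apply, smul_eq_mul] using this
  have htr : ((Matrix.vecMulVec (v l) (v l))ᵀ * M).trace = (β - 1) * ∑ j, v l j * v l j := by
    rw [Matrix.trace]
    simp only [Matrix.diag, Matrix.mul_apply, Matrix.transpose_apply, Matrix.vecMulVec_apply]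
    rw [Finset.sum_comm]
    rw [Finset.mul_sum]
    refine Finset.sum_congr rfl fun j _ => ?_
    calc ∑ i, v l j * v l i * M j i = v l j * ∑ i, M j i * v l i := by
          rw [Finset.mul_sum]; exact Finset.sum_congr rfl fun i _ => by ring
      _ = (β - 1) * (v l j * v l j) := by rw [hMv j]; ring
  rw [htr]
  have hpos : 0 < ∑ j, v l j * v l j := by
    obtain ⟨i0, hi0⟩ := hne l
    refine Finset.sum_pos' (fun j _ => mul_self_nonneg _) ⟨i0, Finset.mem_univ _, ?_⟩
    have : v l i0 = (n : ℝ) - (S l).card := by rw [hv]; simp [hi0]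
    rw [this]
    have : ((S l).card : ℝ) < n := by exact_mod_cast hcard
    nlinarith
  exact mul_neg_of_neg_of_pos (by linarith) hpos
end
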